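/- arXiv:1702.04026 — 2 statements merged into one kernel-verified Lean document; each statement's English description precedes it below -/
import Mathlib

section
/- For a simple random walk on a finite connected graph G with absorbing vertex a, and an edge e = {x,z}, the expected number of traversals of e starting from any vertex u before absorption equals p_{xz}·S_x(u) + p_{zx}·S_z(u), where S_v(u) is the expected number of visits to v, and consequently the expected number of traversals of e is at most 2·d_a(e) + 1, where d_a(e) = min(d(x,a), d(z,a)). -/
/-!
The identity holds because `Se - Sx / deg x - Sz / deg z` is harmonic away from `a` and vanishes
at `a`, so it vanishes by the maximum principle. For the bound, `Sx / deg x` is the potential of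
a unit current from `x` to `a`, and its Dirichlet energy is its value at `x`; Cauchy–Schwarz
along a geodesic from `x` to `a` bounds that value by `dist x a` (effective resistance is at
most graph distance), and by the maximum principle the potential is largest at `x`. Since `x`
and `z` are adjacent, `dist x a + dist z a ≤ 2 * min (dist x a) (dist z a) + 1`.
-/

/-- `IsVisits G a x S` : `S v` is the expected number of visits to `x` before absorption
at `a` for the simple random walk started at `v` (characterized by its linear system). -/
def IsVisits {V : Type*} [Fintype V] [DecidableEq V] (G : SimpleGraph V)
    [DecidableRel G.Adj] (a x : V) (S : V → ℝ) : Prop :=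
  S a = 0 ∧ ∀ v, v ≠ a →
    (G.degree v : ℝ) * S v =
      (if v = x then (G.degree v : ℝ) else 0) + ∑ u ∈ G.neighborFinset v, S u

/-- `IsEdgeVisits G a x z S` : `S v` is the expected number of traversals (in either
direction) of the edge `{x, z}` before absorption at `a`, for the simple random walk
started at `v` (characterized by its linear system: a traversal occurs exactly when the
walk is at `x` or at `z` and moves along the edge). -/
def IsEdgeVisits {V : Type*} [Fintype V] [DecidableEq V] (G : SimpleGraph V)
    [DecidableRel G.Adj] (a x z : V) (S : V → ℝ) : Prop :=
  S a = 0 ∧ ∀ v, v ≠ a →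
    (G.degree v : ℝ) * S v =
      (if v = x ∨ v = z then 1 else 0) + ∑ u ∈ G.neighborFinset v, S u

open Matrix Finset

namespace SimpleGraph

section Walk

variable {V : Type*} {G : SimpleGraph V}

theorem Walk.sum_darts_sub {u v : V} (p : G.Walk u v) (f : V → ℝ) :
    (p.darts.map fun d ↦ f d.fst - f d.snd).sum = f u - f v := by
  induction p with
  | nil => simp
  | cons _ _ ih => simp [ih]

theorem Walk.IsTrail.darts_nodup {u v : V} {p : G.Walk u v} (hp : p.IsTrail) : p.darts.Nodup :=
  hp.edges_nodup.of_map Dart.edge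

end Walk

variable {V : Type*} [Fintype V] {G : SimpleGraph V} [DecidableRel G.Adj]

theorem sum_darts_eq_sum_sum_adj (g : V → V → ℝ) :
    ∑ d : G.Dart, g d.fst d.snd = ∑ i, ∑ j, if G.Adj i j then g i j else 0 := by
  rw [← Fintype.sum_prod_type' (fun i j ↦ if G.Adj i j then g i j else 0), ← sum_filter]
  exact sum_bij (fun d _ ↦ d.toProd) (fun d _ ↦ by simp [d.adj])
    (fun _ _ _ _ h ↦ Dart.toProd_injective h)
    (fun q hq ↦ ⟨⟨q, (mem_filter.1 hq).2⟩, mem_univ _, rfl⟩) fun _ _ ↦ rfl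

variable [DecidableEq V]

theorem lapMatrix_mulVec_apply_eq_sum_sub (f : V → ℝ) (v : V) :
    (G.lapMatrix ℝ *ᵥ f) v = ∑ w ∈ G.neighborFinset v, (f v - f w) := by
  rw [lapMatrix_mulVec_apply, sum_sub_distrib, sum_const, card_neighborFinset_eq_degree,
    nsmul_eq_mul]

theorem apply_eq_of_adj_of_lapMatrix_mulVec_nonpos {f : V → ℝ} {v w : V}
    (hmax : ∀ u, f u ≤ f v) (hv : (G.lapMatrix ℝ *ᵥ f) v ≤ 0) (hvw : G.Adj v w) :
    f w = f v := by
  rw [lapMatrix_mulVec_apply_eq_sum_sub] at hv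
  have hzero := (sum_eq_zero_iff_of_nonneg fun u _ ↦ sub_nonneg.2 (hmax u)).1
    (le_antisymm hv (sum_nonneg fun u _ ↦ sub_nonneg.2 (hmax u))) w
    ((mem_neighborFinset G v w).2 hvw)
  linarith

theorem Connected.exists_mem_forall_le_of_lapMatrix_mulVec_nonpos (hG : G.Connected)
    {f : V → ℝ} {B : Set V} (hB : B.Nonempty)
    (hf : ∀ v ∉ B, (G.lapMatrix ℝ *ᵥ f) v ≤ 0) : ∃ b ∈ B, ∀ u, f u ≤ f b := by
  obtain ⟨b, hb⟩ := hB
  have : Nonempty V := ⟨b⟩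
  obtain ⟨v, hv⟩ := Finite.exists_max f
  suffices ∀ {v' b : V}, G.Walk v' b → b ∈ B → f v' = f v → ∃ c ∈ B, f c = f v by
    obtain ⟨c, hc, hcv⟩ := this (hG v b).some hb rfl
    exact ⟨c, hc, hcv ▸ hv⟩
  intro v' b p
  induction p with
  | nil => exact fun hb hv' ↦ ⟨_, hb, hv'⟩
  | @cons v' w _ hadj _ ih =>
    intro hb hv'
    by_cases hv'B : v' ∈ B
    · exact ⟨v', hv'B, hv'⟩
    · exact ih hb ((apply_eq_of_adj_of_lapMatrix_mulVec_nonpos (fun u ↦ (hv u).trans hv'.ge)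
        (hf v' hv'B) hadj).trans hv')

theorem Connected.eq_zero_of_lapMatrix_mulVec_eq_zero (hG : G.Connected) {f : V → ℝ} {a : V}
    (ha : f a = 0) (hf : ∀ v ≠ a, (G.lapMatrix ℝ *ᵥ f) v = 0) : f = 0 := by
  have hle : ∀ g : V → ℝ, g a = 0 → (∀ v ≠ a, (G.lapMatrix ℝ *ᵥ g) v = 0) → ∀ u, g u ≤ 0 := by
    intro g hga hg u
    obtain ⟨b, rfl, hb⟩ := hG.exists_mem_forall_le_of_lapMatrix_mulVec_nonpos
      (Set.singleton_nonempty a) fun v hv ↦ (hg v hv).le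
    exact hga ▸ hb u
  funext u
  have hneg := hle (-f) (by simp [ha]) fun v hv ↦ by simp [mulVec_neg, hf v hv]
  exact le_antisymm (hle f ha hf u) (by simpa using hneg u)

theorem Walk.IsTrail.sum_darts_sq_le {u v : V} {p : G.Walk u v} (hp : p.IsTrail) (f : V → ℝ) :
    ∑ d ∈ p.darts.toFinset, (f d.fst - f d.snd) ^ 2 ≤ toLinearMap₂' ℝ (G.lapMatrix ℝ) f f := by
  set T := p.darts.toFinset
  -- a trail uses each edge once, hence never both a dart and its reverse
  have hdisj : Disjoint T (T.image Dart.symm) := by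
    refine Finset.disjoint_left.2 fun d hd hd' ↦ ?_
    obtain ⟨d', hd'T, rfl⟩ := mem_image.1 hd'
    exact d'.symm_ne (List.inj_on_of_nodup_map hp.edges_nodup (List.mem_toFinset.1 hd)
      (List.mem_toFinset.1 hd'T) d'.edge_symm)
  rw [lapMatrix_toLinearMap₂', ← sum_darts_eq_sum_sum_adj fun i j ↦ (f i - f j) ^ 2,
    le_div_iff₀ two_pos]
  calc (∑ d ∈ T, (f d.fst - f d.snd) ^ 2) * 2
      = ∑ d ∈ T ∪ T.image Dart.symm, (f d.fst - f d.snd) ^ 2 := by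
        rw [sum_union hdisj, sum_image Dart.symm_involutive.injective.injOn, ← sum_add_distrib,
          sum_mul]
        refine sum_congr rfl fun d _ ↦ ?_
        simp only [Dart.symm_toProd, Prod.fst_swap, Prod.snd_swap]
        ring
    _ ≤ ∑ d : G.Dart, (f d.fst - f d.snd) ^ 2 := sum_le_univ_sum_of_nonneg fun _ ↦ sq_nonneg _

theorem Walk.IsTrail.sq_sub_le_length_mul {u v : V} {p : G.Walk u v} (hp : p.IsTrail)
    (f : V → ℝ) : (f u - f v) ^ 2 ≤ p.length * toLinearMap₂' ℝ (G.lapMatrix ℝ) f f := by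
  calc (f u - f v) ^ 2 = (∑ d ∈ p.darts.toFinset, (f d.fst - f d.snd)) ^ 2 := by
        rw [List.sum_toFinset _ hp.darts_nodup, p.sum_darts_sub]
    _ ≤ #p.darts.toFinset * ∑ d ∈ p.darts.toFinset, (f d.fst - f d.snd) ^ 2 :=
        sq_sum_le_card_mul_sum_sq
    _ ≤ p.length * toLinearMap₂' ℝ (G.lapMatrix ℝ) f f := by
        rw [List.toFinset_card_of_nodup hp.darts_nodup, p.length_darts]
        gcongr
        exact hp.sum_darts_sq_le f

end SimpleGraph

open SimpleGraph

section Visits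

variable {V : Type*} [Fintype V] [DecidableEq V] {G : SimpleGraph V} [DecidableRel G.Adj]
  {a x z : V} {S : V → ℝ}

theorem IsVisits.lapMatrix_mulVec_apply (hS : IsVisits G a x S) {v : V} (hv : v ≠ a) :
    (G.lapMatrix ℝ *ᵥ S) v = if v = x then (G.degree x : ℝ) else 0 := by
  rw [SimpleGraph.lapMatrix_mulVec_apply, hS.2 v hv]
  split_ifs with h
  · subst h; ring
  · ring

theorem IsEdgeVisits.lapMatrix_mulVec_apply (hS : IsEdgeVisits G a x z S) {v : V} (hv : v ≠ a) :
    (G.lapMatrix ℝ *ᵥ S) v = if v = x ∨ v = z then 1 else 0 := by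
  rw [SimpleGraph.lapMatrix_mulVec_apply, hS.2 v hv]
  ring

theorem IsVisits.toLinearMap₂'_lapMatrix (hS : IsVisits G a x S) :
    toLinearMap₂' ℝ (G.lapMatrix ℝ) S S = G.degree x * S x := by
  rw [toLinearMap₂'_apply', dotProduct, sum_eq_single x]
  · by_cases hx : x = a
    · simp [hx, hS.1]
    · rw [hS.lapMatrix_mulVec_apply hx, if_pos rfl, mul_comm]
  · intro v _ hvx
    by_cases hv : v = a
    · simp [hv, hS.1]
    · rw [hS.lapMatrix_mulVec_apply hv, if_neg hvx, mul_zero]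
  · simp

theorem IsVisits.le_degree_mul_dist (hG : G.Connected) (hS : IsVisits G a x S) (u : V) :
    S u ≤ G.degree x * G.dist x a := by
  have hx : S x ≤ G.degree x * G.dist x a := by
    obtain ⟨p, hp, hlen⟩ := hG.exists_path_of_dist x a
    have h := hp.isTrail.sq_sub_le_length_mul S
    rw [hS.1, sub_zero, hS.toLinearMap₂'_lapMatrix, hlen] at h
    have : (0 : ℝ) ≤ G.degree x * G.dist x a := by positivity
    nlinarith
  obtain ⟨b, hb, hub⟩ := hG.exists_mem_forall_le_of_lapMatrix_mulVec_nonpos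
    (B := {a, x}) (Set.insert_nonempty a {x}) fun v hv ↦ by
      simp only [Set.mem_insert_iff, Set.mem_singleton_iff, not_or] at hv
      rw [hS.lapMatrix_mulVec_apply hv.1, if_neg hv.2]
  rcases hb with rfl | rfl
  · exact (hub u).trans (by rw [hS.1]; positivity)
  · exact (hub u).trans hx

theorem IsEdgeVisits.eq_inv_degree_smul_add (hG : G.Connected) (hxz : G.Adj x z)
    {Sx Sz Se : V → ℝ} (hSx : IsVisits G a x Sx) (hSz : IsVisits G a z Sz)
    (hSe : IsEdgeVisits G a x z Se) :
    Se = (G.degree x : ℝ)⁻¹ • Sx + (G.degree z : ℝ)⁻¹ • Sz := by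
  have hx : (G.degree x : ℝ) ≠ 0 := by exact_mod_cast hxz.degree_pos_left.ne'
  have hz : (G.degree z : ℝ) ≠ 0 := by exact_mod_cast hxz.degree_pos_right.ne'
  rw [← sub_eq_zero]
  refine hG.eq_zero_of_lapMatrix_mulVec_eq_zero (a := a) (by simp [hSe.1, hSx.1, hSz.1])
    fun v hv ↦ ?_
  simp only [mulVec_sub, mulVec_add, mulVec_smul, Pi.sub_apply, Pi.add_apply, Pi.smul_apply,
    smul_eq_mul, hSe.lapMatrix_mulVec_apply hv, hSx.lapMatrix_mulVec_apply hv,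
    hSz.lapMatrix_mulVec_apply hv]
  by_cases hvx : v = x
  · subst hvx
    simp [hxz.ne, hx]
  · by_cases hvz : v = z <;> simp [hvx, hvz, hxz.ne.symm, hz]

end Visits

/-- For a simple random walk on a finite connected graph `G` with absorbing vertex `a`
and an edge `e = {x,z}`, the expected number of traversals of `e` from any start `u`
equals `p_{xz}·S_x(u) + p_{zx}·S_z(u)`, and consequently it is at most `2·d_a(e) + 1`
where `d_a(e) = min(d(x,a), d(z,a))`. -/
theorem edge_traversals_identity_and_bound {V : Type*} [Fintype V] [DecidableEq V]
    (G : SimpleGraph V) [DecidableRel G.Adj] (hconn : G.Connected)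
    (a x z : V) (hadj : G.Adj x z)
    (Sx Sz Se : V → ℝ)
    (hSx : IsVisits G a x Sx) (hSz : IsVisits G a z Sz)
    (hSe : IsEdgeVisits G a x z Se) (u : V) :
    Se u = (1 / (G.degree x : ℝ)) * Sx u + (1 / (G.degree z : ℝ)) * Sz u ∧
      Se u ≤ 2 * (min (G.dist x a) (G.dist z a) : ℝ) + 1 := by
  have hSe_eq := hSe.eq_inv_degree_smul_add hconn hadj hSx hSz
  have hx : (0 : ℝ) < G.degree x := by exact_mod_cast hadj.degree_pos_left
  have hz : (0 : ℝ) < G.degree z := by exact_mod_cast hadj.degree_pos_right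
  have hdist : G.dist x a + G.dist z a ≤ 2 * min (G.dist x a) (G.dist z a) + 1 := by
    rw [dist_comm (u := x), dist_comm (u := z)]
    rcases hadj.diff_dist_adj (u := a) with h | h | h <;> omega
  refine ⟨by simp [hSe_eq, one_div], ?_⟩
  calc Se u = Sx u / G.degree x + Sz u / G.degree z := by simp [hSe_eq, div_eq_inv_mul]
    _ ≤ G.dist x a + G.dist z a :=
        add_le_add ((div_le_iff₀' hx).2 (hSx.le_degree_mul_dist hconn u))
          ((div_le_iff₀' hz).2 (hSz.le_degree_mul_dist hconn u))
    _ ≤ 2 * (min (G.dist x a) (G.dist z a) : ℝ) + 1 := by exact_mod_cast hdist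
end

section
/- For a random walk on a finite tree T with m edges generated by an edge-weight function with asymmetry τ, and with absorbing vertex a, for any vertex x and any neighbor y of x in the tail of x, one has H(y,a) − H(x,a) ≤ P(τ, ℓ(y)+1), where ℓ(y) is the number of edges in the tail of y and P(t,k) = 2Σ_{j=1}^{k−1} t^j + 1. -/
/-- `IsWeightedHittingTime G w a H` : `H` satisfies the linear system characterizing the
expected hitting times of the absorbing vertex `a` for the random walk on `G` generated
by the edge-weight function `w` (transition probabilities `p_{xy} = w x y / ∑_z w x z`;
`w` vanishes off edges, so the sums effectively range over neighbors). -/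
def IsWeightedHittingTime {V : Type*} [Fintype V] (G : SimpleGraph V)
    (w : V → V → ℝ) (a : V) (H : V → ℝ) : Prop :=
  H a = 0 ∧ ∀ x, x ≠ a →
    (∑ y, w x y) * H x = (∑ y, w x y) + ∑ y, w x y * H y

/-- The tail `L(v)` of a vertex `v` relative to `a`: the set of vertices `u` each of whose
walks to `a` must pass through `v`. -/
def tail {V : Type*} (G : SimpleGraph V) (a v : V) : Set V :=
  {u | ∀ p : G.Walk u a, v ∈ p.support}

/-- `ℓ(v)`: the number of edges of the subtree spanned by the tail of `v`. -/
noncomputable def tailEdges {V : Type*} (G : SimpleGraph V) (a v : V) : ℕ :=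
  (tail G a v).ncard - 1

/-- `P t m = 2·∑_{k=1}^{m−1} t^k + 1`. -/
noncomputable def P (t : ℝ) (m : ℕ) : ℝ := 2 * ∑ k ∈ Finset.Ico 1 m, t ^ k + 1

/-!
Root the tree at `a`. If `x` is the parent of `y`, the hitting-time equation at `y` reads
`w(y,x) (H y - H x) = w(y,x) + ∑ᵤ w(y,u) (1 + H u - H y)`, the sum running over the children `u`
of `y`. Inductively `H u - H y ≤ P(τ, ℓ(u)+1)`, and `w(y,u) ≤ τ w(y,x)`, so
`H y - H x ≤ 1 + ∑ᵤ τ (1 + P(τ, ℓ(u)+1)) = 1 + ∑ᵤ (P(τ, ℓ(u)+2) - 1)`.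
The tails of the children are disjoint subsets of the tail of `y` minus `y`, so `∑ᵤ (ℓ(u)+1) ≤ ℓ(y)`,
and for `τ ≥ 1` the map `m ↦ P(τ, m+1) - 1` is superadditive; together they bound the right-hand
side by `P(τ, ℓ(y)+1)`.
-/

lemma eq_of_root_mem_tail {V : Type*} {G : SimpleGraph V} {a v : V} (h : a ∈ tail G a v) :
    v = a := by
  simpa using h .nil

lemma tail_subset_tail {V : Type*} {G : SimpleGraph V} {a u v : V} (h : u ∈ tail G a v) :
    tail G a u ⊆ tail G a v := by
  classical
  intro w hw p
  exact p.support_dropUntil_subset_support (hw p) (h _)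

lemma tailEdges_add_one {V : Type*} [Finite V] (G : SimpleGraph V) (a u : V) :
    tailEdges G a u + 1 = (tail G a u).ncard := by
  have : 0 < (tail G a u).ncard :=
    (Set.ncard_pos (Set.toFinite _)).mpr ⟨u, fun p => p.start_mem_support⟩
  rw [tailEdges]
  omega

namespace SimpleGraph.IsTree

variable {V : Type*} {T : SimpleGraph V} (hT : T.IsTree)

noncomputable def path (u v : V) : T.Walk u v := (hT.existsUnique_path u v).exists.choose

lemma path_isPath (u v : V) : (hT.path u v).IsPath := (hT.existsUnique_path u v).exists.choose_spec

lemma eq_path {u v : V} {p : T.Walk u v} (hp : p.IsPath) : p = hT.path u v :=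
  (hT.existsUnique_path u v).unique hp (hT.path_isPath u v)

variable {a : V}

lemma mem_tail_iff {u v : V} : v ∈ tail T a u ↔ u ∈ (hT.path a v).support := by
  refine ⟨fun h => by simpa using h (hT.path a v).reverse, fun h p => ?_⟩
  classical
  rw [← hT.eq_path p.reverse.bypass_isPath] at h
  simpa using p.reverse.support_bypass_subset_support h

lemma getVert_path_of_mem_tail {u v : V} (h : v ∈ tail T a u) :
    (hT.path a v).getVert (hT.path a u).length = u := by
  classical
  have h' := hT.mem_tail_iff.mp h
  rw [← hT.eq_path ((hT.path_isPath a v).takeUntil h')]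
  exact Walk.getVert_length_takeUntil h'

lemma eq_of_mem_tail_of_length_path_eq {u₁ u₂ v : V} (h₁ : v ∈ tail T a u₁)
    (h₂ : v ∈ tail T a u₂) (hlen : (hT.path a u₁).length = (hT.path a u₂).length) :
    u₁ = u₂ := by
  rw [← hT.getVert_path_of_mem_tail h₁, hlen, hT.getVert_path_of_mem_tail h₂]

variable {x y u : V}

lemma notMem_support_path_of_adj_of_ne (hxy : T.Adj x y) (hy : y ∈ tail T a x)
    (hyu : T.Adj y u) (hux : u ≠ x) : u ∉ (hT.path a y).support := fun hu =>
  hux <| (hT.isAcyclic.eq_penultimate_of_adj_end (hT.path_isPath a y) hyu hu).trans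
    (hT.isAcyclic.eq_penultimate_of_adj_end (hT.path_isPath a y) hxy.symm
      (hT.mem_tail_iff.mp hy)).symm

lemma path_eq_concat_of_adj_of_ne (hxy : T.Adj x y) (hy : y ∈ tail T a x)
    (hyu : T.Adj y u) (hux : u ≠ x) : hT.path a u = (hT.path a y).concat hyu :=
  hT.isAcyclic.path_concat (hT.path_isPath a y) (hT.path_isPath a u) hyu <|
    hT.isAcyclic.mem_support_of_ne_mem_support_of_adj_of_isPath (hT.path_isPath a u)
      (hT.path_isPath a y) hyu.symm (hT.notMem_support_path_of_adj_of_ne hxy hy hyu hux)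

include hT in
lemma mem_tail_of_adj_of_ne (hxy : T.Adj x y) (hy : y ∈ tail T a x)
    (hyu : T.Adj y u) (hux : u ≠ x) : u ∈ tail T a y := by
  rw [hT.mem_tail_iff, hT.path_eq_concat_of_adj_of_ne hxy hy hyu hux, Walk.support_concat]
  simp

include hT in
lemma sum_tailEdges_add_one_le [Fintype V] [DecidableRel T.Adj] [DecidableEq V]
    (hxy : T.Adj x y) (hy : y ∈ tail T a x) :
    ∑ u ∈ (T.neighborFinset y).erase x, (tailEdges T a u + 1) ≤ tailEdges T a y := by
  set C := (T.neighborFinset y).erase x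
  have hC : ∀ u ∈ C, T.Adj y u ∧ u ≠ x := fun u hu => by
    simpa [C, and_comm] using hu
  have hsub : insert y (⋃ u ∈ (C : Set V), tail T a u) ⊆ tail T a y :=
    Set.insert_subset (fun p => p.start_mem_support) <| Set.iUnion₂_subset fun u hu =>
      tail_subset_tail (hT.mem_tail_of_adj_of_ne hxy hy (hC u hu).1 (hC u hu).2)
  have hy_notMem : y ∉ ⋃ u ∈ (C : Set V), tail T a u := by
    simp only [Set.mem_iUnion, not_exists]
    intro u hu hyu
    exact hT.notMem_support_path_of_adj_of_ne hxy hy (hC u hu).1 (hC u hu).2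
      (hT.mem_tail_iff.mp hyu)
  have hdisj : (C : Set V).PairwiseDisjoint (tail T a) := by
    intro u₁ h₁ u₂ h₂ hne
    refine Set.disjoint_left.mpr fun v hv₁ hv₂ =>
      hne (hT.eq_of_mem_tail_of_length_path_eq hv₁ hv₂ ?_)
    rw [hT.path_eq_concat_of_adj_of_ne hxy hy (hC u₁ h₁).1 (hC u₁ h₁).2,
      hT.path_eq_concat_of_adj_of_ne hxy hy (hC u₂ h₂).1 (hC u₂ h₂).2,
      Walk.length_concat, Walk.length_concat]
  have hcard := Set.ncard_le_ncard hsub (Set.toFinite _)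
  rw [Set.ncard_insert_of_notMem hy_notMem (Set.toFinite _),
    C.finite_toSet.ncard_biUnion (fun _ _ => Set.toFinite _) hdisj,
    finsum_mem_coe_finset, ← tailEdges_add_one] at hcard
  simp only [tailEdges_add_one]
  omega

end SimpleGraph.IsTree

lemma P_one (t : ℝ) : P t 1 = 1 := by simp [P]

lemma P_succ (t : ℝ) {m : ℕ} (hm : 1 ≤ m) : P t (m + 1) = P t m + 2 * t ^ m := by
  rw [P, P, Finset.sum_Ico_succ_top hm]
  ring

lemma P_add_two (t : ℝ) (m : ℕ) : P t (m + 2) = t * (P t (m + 1) + 1) + 1 := by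
  simp only [P, Finset.sum_Ico_eq_sum_range, show m + 2 - 1 = m + 1 by omega, Nat.add_sub_cancel,
    Finset.sum_range_succ', mul_add, Finset.mul_sum, pow_succ]
  ring_nf

lemma one_le_P {t : ℝ} (ht : 0 ≤ t) (m : ℕ) : 1 ≤ P t m := by
  have := Finset.sum_nonneg fun k (_ : k ∈ Finset.Ico 1 m) => pow_nonneg ht k
  rw [P]
  linarith

lemma P_mono {t : ℝ} (ht : 0 ≤ t) : Monotone (P t) := fun m n hmn => by
  have := Finset.sum_le_sum_of_subset_of_nonneg (f := (t ^ ·))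
    (Finset.Ico_subset_Ico_right (a := 1) hmn) fun k _ _ => pow_nonneg ht k
  rw [P, P]
  linarith

lemma P_add_le {t : ℝ} (ht : 1 ≤ t) (m n : ℕ) :
    P t (m + 1) + P t (n + 1) ≤ P t (m + n + 1) + 1 := by
  induction n with
  | zero => simp [P_one]
  | succ n ih =>
    rw [P_succ t (by omega : 1 ≤ n + 1), show m + (n + 1) + 1 = m + n + 1 + 1 by ring,
      P_succ t (by omega : 1 ≤ m + n + 1)]
    have : t ^ (n + 1) ≤ t ^ (m + n + 1) := pow_le_pow_right₀ ht (by omega)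
    linarith

lemma P_sum_le {t : ℝ} (ht : 1 ≤ t) {ι : Type*} (s : Finset ι) (f : ι → ℕ) :
    1 + ∑ i ∈ s, (P t (f i + 1) - 1) ≤ P t (∑ i ∈ s, f i + 1) := by
  classical
  induction s using Finset.induction_on with
  | empty => simp [P_one]
  | insert j s hj ih =>
    rw [Finset.sum_insert hj, Finset.sum_insert hj]
    linarith [P_add_le ht (f j) (∑ i ∈ s, f i)]

namespace IsWeightedHittingTime

variable {V : Type*} [Fintype V] {G : SimpleGraph V} [DecidableRel G.Adj] [DecidableEq V]
  {w : V → V → ℝ} {a x y : V} {H : V → ℝ}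

lemma mul_sub_eq (hH : IsWeightedHittingTime G w a H) (hya : y ≠ a) (hyx : G.Adj y x)
    (hw_zero : ∀ u, ¬ G.Adj y u → w y u = 0) :
    w y x * (H y - H x) =
      w y x + ∑ u ∈ (G.neighborFinset y).erase x, w y u * (1 + (H u - H y)) := by
  have hzero : ∑ u, w y u * (1 + (H u - H y)) = 0 := by
    simp only [mul_add, mul_sub, mul_one, Finset.sum_add_distrib, Finset.sum_sub_distrib,
      ← Finset.sum_mul, hH.2 y hya]
    ring
  rw [← Finset.sum_subset (Finset.subset_univ (G.neighborFinset y)) fun u _ hu => by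
      rw [hw_zero u (by simpa using hu), zero_mul],
    ← Finset.add_sum_erase _ _ ((G.mem_neighborFinset y x).mpr hyx)] at hzero
  linarith

lemma sub_le (hH : IsWeightedHittingTime G w a H) (hya : y ≠ a) (hyx : G.Adj y x)
    (hw_pos : ∀ u, G.Adj y u → 0 < w y u) (hw_zero : ∀ u, ¬ G.Adj y u → w y u = 0)
    {τ : ℝ} (hτ : ∀ u, G.Adj y u → w y u ≤ τ * w y x) {b : V → ℝ}
    (hb : ∀ u ∈ (G.neighborFinset y).erase x, H u - H y ≤ b u)
    (hb_nonneg : ∀ u ∈ (G.neighborFinset y).erase x, 0 ≤ 1 + b u) :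
    H y - H x ≤ 1 + ∑ u ∈ (G.neighborFinset y).erase x, τ * (1 + b u) := by
  have hwx := hw_pos x hyx
  have hterm : ∀ u ∈ (G.neighborFinset y).erase x,
      w y u * (1 + (H u - H y)) ≤ w y x * (τ * (1 + b u)) := fun u hu => by
    have hyu : G.Adj y u := by simpa using (Finset.mem_erase.mp hu).2
    calc w y u * (1 + (H u - H y)) ≤ w y u * (1 + b u) := by
          gcongr
          · exact (hw_pos u hyu).le
          · exact hb u hu
      _ ≤ τ * w y x * (1 + b u) := by gcongr; exacts [hb_nonneg u hu, hτ u hyu]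
      _ = w y x * (τ * (1 + b u)) := by ring
  refine le_of_mul_le_mul_left ?_ hwx
  rw [hH.mul_sub_eq hya hyx hw_zero, mul_add, mul_one, Finset.mul_sum]
  linarith [Finset.sum_le_sum hterm]

end IsWeightedHittingTime

theorem tree_weighted_tail_hitting_le_general {V : Type*} [Fintype V]
    (T : SimpleGraph V) (htree : T.IsTree)
    (w : V → V → ℝ)
    (hw_pos : ∀ x y, T.Adj x y → 0 < w x y)
    (hw_zero : ∀ x y, ¬ T.Adj x y → w x y = 0)
    (τ : ℝ) (hτ : ∀ x y z, T.Adj x y → T.Adj x z → w x y ≤ τ * w x z)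
    (a x y : V) (hadj : T.Adj x y) (hy : y ∈ tail T a x)
    (H : V → ℝ) (hH : IsWeightedHittingTime T w a H) :
    H y - H x ≤ P τ (tailEdges T a y + 1) := by
  classical
  have hτ₁ : 1 ≤ τ :=
    le_of_mul_le_mul_right (by simpa using hτ x y y hadj hadj) (hw_pos x y hadj)
  induction hn : tailEdges T a y using Nat.strong_induction_on generalizing x y with
  | _ n ih =>
  have hsum := htree.sum_tailEdges_add_one_le hadj hy
  set C := (T.neighborFinset y).erase x
  have hC : ∀ u ∈ C, T.Adj y u ∧ u ≠ x := fun u hu => by simpa [C, and_comm] using hu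
  have hchild : ∀ u ∈ C, H u - H y ≤ P τ (tailEdges T a u + 1) := fun u hu => by
    have := Finset.single_le_sum (f := (tailEdges T a · + 1)) (fun _ _ => Nat.zero_le _) hu
    exact ih _ (by omega) y u (hC u hu).1
      (htree.mem_tail_of_adj_of_ne hadj hy (hC u hu).1 (hC u hu).2) rfl
  have hya : y ≠ a := by
    rintro rfl
    exact hadj.ne (eq_of_root_mem_tail hy)
  calc H y - H x ≤ 1 + ∑ u ∈ C, τ * (1 + P τ (tailEdges T a u + 1)) :=
        hH.sub_le hya hadj.symm (hw_pos y) (hw_zero y) (fun u hu => hτ y u x hu hadj.symm) hchild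
          fun u _ => by linarith [one_le_P (by linarith) (tailEdges T a u + 1)]
    _ = 1 + ∑ u ∈ C, (P τ (tailEdges T a u + 1 + 1) - 1) := by simp only [P_add_two]; ring_nf
    _ ≤ P τ (∑ u ∈ C, (tailEdges T a u + 1) + 1) := P_sum_le hτ₁ _ _
    _ ≤ P τ (n + 1) := P_mono (by linarith) (by omega)

/-- For a random walk on a finite tree `T` generated by an edge-weight function with
asymmetry at most `τ`, with absorbing vertex `a`: for any vertex `x` and any neighbor
`y` of `x` in the tail of `x`, `H(y,a) − H(x,a) ≤ P(τ, ℓ(y)+1)`. -/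
theorem tree_weighted_tail_hitting_le {V : Type*} [Fintype V]
    (T : SimpleGraph V) (htree : T.IsTree)
    (w : V → V → ℝ)
    (hw_symm : ∀ x y, w x y = w y x)
    (hw_pos : ∀ x y, T.Adj x y → 0 < w x y)
    (hw_zero : ∀ x y, ¬ T.Adj x y → w x y = 0)
    (τ : ℝ) (hτ : ∀ x y z, T.Adj x y → T.Adj x z → w x y ≤ τ * w x z)
    (a x y : V) (hadj : T.Adj x y) (hy : y ∈ tail T a x)
    (H : V → ℝ) (hH : IsWeightedHittingTime T w a H) :
    H y - H x ≤ P τ (tailEdges T a y + 1) :=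
  tree_weighted_tail_hitting_le_general T htree w hw_pos hw_zero τ hτ a x y hadj hy H hH
end
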